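/- Suppose Z(G) is a finite group of odd order. Then the squaring map on Z(G) is surjective (so Z(G)/2Z(G) is trivial) and {s ∈ Z(G) : s² = e} = {e}. Consequently, every homomorphism φ : Γ̃ → G with conjugation-stabilizer Z(G) whose conjugacy class is fixed by the involution τ extends to a homomorphism Γ → G, uniquely up to conjugation. -/

import Mathlib

theorem indexTwoNormal {Γ : Type*} [Group Γ] (H : Subgroup Γ) (h : H.index = 2) :
    H.Normal := by
  constructor
  intro n hn g
  rw [Subgroup.mul_mem_iff_of_index_two h, Subgroup.mul_mem_iff_of_index_two h, inv_mem_iff]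
  simp [hn]

/-- The automorphism `Ad_c : x ↦ c x c⁻¹` of an index-two (hence normal) subgroup. -/
def adSub {Γ : Type*} [Group Γ] (H : Subgroup Γ) (h : H.index = 2) (c : Γ) : H →* H where
  toFun x := ⟨c * x * c⁻¹, (indexTwoNormal H h).conj_mem x x.2 c⟩
  map_one' := by ext; simp
  map_mul' x y := by
    ext
    show c * ((x : Γ) * (y : Γ)) * c⁻¹ = c * (x : Γ) * c⁻¹ * (c * (y : Γ) * c⁻¹)
    group

/-!
Squaring is a bijection of any group of odd order, in particular of `Z(G)`.
If `ψ` extends `φ`, then `ψ c` implements `τ` on `φ` and `(ψ c)² = φ(c²)`; conversely, any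
`g` implementing `τ` with `g² = φ(c²)` defines an extension by `x c ↦ φ(x) g`. Given some `g`
implementing `τ`, conjugation by `g²` and by `φ(c²)` agree on `φ(Γ̃)`, so `φ(c²)⁻¹ g²` is
central; correcting `g` by a central square root of its inverse gives `g² = φ(c²)`. Two
extensions differ at `c` by a central element whose square is `e`, so they coincide.
-/

namespace Subgroup

variable {G : Type*} [Group G] (S : Subgroup G) (hodd : Odd (Nat.card S))
include hodd

theorem exists_sq_eq_of_odd_natCard {z : G} (hz : z ∈ S) : ∃ t ∈ S, t ^ 2 = z := by
  obtain ⟨t, ht⟩ :=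
    (Nat.Coprime.pow_left_bijective hodd.coprime_two_right).surjective (⟨z, hz⟩ : S)
  exact ⟨t, t.2, congrArg Subtype.val ht⟩

theorem eq_one_of_sq_eq_one_of_odd_natCard {s : G} (hs : s ∈ S) (h : s ^ 2 = 1) : s = 1 := by
  have : (⟨s, hs⟩ : S) ^ 2 = 1 ^ 2 := Subtype.ext (by simpa using h)
  simpa using (Nat.Coprime.pow_left_bijective hodd.coprime_two_right).injective this

end Subgroup

theorem inv_mul_conj_eq_of_conj_eq {G : Type*} [Group G] {a b y : G}
    (h : a * y * a⁻¹ = b * y * b⁻¹) : a⁻¹ * b * y * (a⁻¹ * b)⁻¹ = y := by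
  calc a⁻¹ * b * y * (a⁻¹ * b)⁻¹ = a⁻¹ * (b * y * b⁻¹) * a := by group
    _ = y := by rw [← h]; group

theorem eq_of_sq_eq_sq_of_inv_mul_mem_center {G : Type*} [Group G]
    (htorsion : ∀ s ∈ Subgroup.center G, s ^ 2 = 1 → s = 1) {a b : G}
    (hz : a⁻¹ * b ∈ Subgroup.center G) (h : a ^ 2 = b ^ 2) : a = b := by
  refine inv_mul_eq_one.mp (htorsion _ hz ?_)
  calc (a⁻¹ * b) ^ 2 = (a⁻¹ * b) * a⁻¹ * b := by rw [sq, ← mul_assoc]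
    _ = a⁻¹ * (a⁻¹ * b) * b := by rw [← Subgroup.mem_center_iff.mp hz a⁻¹]
    _ = (a ^ 2)⁻¹ * b ^ 2 := by simp only [sq]; group
    _ = 1 := by rw [h, inv_mul_cancel]

namespace IndexTwo

variable {Γ G : Type*} [Group Γ] [Group G] {H : Subgroup Γ} (h2 : H.index = 2) {c : Γ}
include h2

theorem adSub_coe (x : H) : (adSub H h2 c x : Γ) = c * x * c⁻¹ := rfl

variable (c) in
def square : H := ⟨c ^ 2, Subgroup.sq_mem_of_index_two h2 c⟩

theorem adSub_adSub (x : H) :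
    adSub H h2 c (adSub H h2 c x) = square h2 c * x * (square h2 c)⁻¹ := by
  ext
  simp only [adSub_coe, square, Subgroup.coe_mul, Subgroup.coe_inv, pow_two]
  group

theorem exists_conj_eq_and_sq_eq {φ : H →* G}
    (hcentral : ∀ h : G, (∀ x : H, h * φ x * h⁻¹ = φ x) → h ∈ Subgroup.center G)
    (hroot : ∀ z ∈ Subgroup.center G, ∃ t ∈ Subgroup.center G, t ^ 2 = z) {g : G}
    (hg : ∀ x : H, φ (adSub H h2 c x) = g * φ x * g⁻¹) :
    ∃ g' : G, (∀ x : H, φ (adSub H h2 c x) = g' * φ x * g'⁻¹) ∧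
      g' ^ 2 = φ (square h2 c) := by
  set C := square h2 c
  have hw : (φ C)⁻¹ * g ^ 2 ∈ Subgroup.center G := by
    refine hcentral _ fun x => inv_mul_conj_eq_of_conj_eq ?_
    calc φ C * φ x * (φ C)⁻¹ = φ (adSub H h2 c (adSub H h2 c x)) := by
          rw [adSub_adSub, map_mul, map_mul, map_inv]
      _ = g ^ 2 * φ x * (g ^ 2)⁻¹ := by rw [hg, hg, sq]; group
  obtain ⟨t, ht, ht2⟩ := hroot _ (inv_mem hw)
  have htφ : ∀ x : H, t * φ x * t⁻¹ = φ x := fun x => by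
    rw [← Subgroup.mem_center_iff.mp ht, mul_inv_cancel_right]
  refine ⟨g * t, fun x => ?_, ?_⟩
  · calc φ (adSub H h2 c x) = g * (t * φ x * t⁻¹) * g⁻¹ := by rw [htφ, hg]
      _ = g * t * φ x * (g * t)⁻¹ := by group
  · have hgt : Commute g t := Subgroup.mem_center_iff.mp ht g
    rw [hgt.mul_pow, ht2]
    group

variable (hc : c ∉ H)
include hc

theorem mul_inv_mem_of_notMem {y : Γ} (hy : y ∉ H) : y * c⁻¹ ∈ H :=
  (Subgroup.mul_mem_iff_of_index_two h2).mpr (iff_of_false hy (inv_mem_iff.not.mpr hc))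

theorem exists_eq_or_exists_eq_mul (y : Γ) : (∃ x : H, y = x) ∨ ∃ x : H, y = x * c := by
  by_cases hy : y ∈ H
  · exact .inl ⟨⟨y, hy⟩, rfl⟩
  · exact .inr ⟨⟨y * c⁻¹, mul_inv_mem_of_notMem h2 hc hy⟩, by simp⟩

theorem monoidHom_ext {ψ₁ ψ₂ : Γ →* G} (hH : ∀ x : H, ψ₁ x = ψ₂ x) (hc' : ψ₁ c = ψ₂ c) :
    ψ₁ = ψ₂ := by
  ext y
  rcases exists_eq_or_exists_eq_mul h2 hc y with ⟨x, rfl⟩ | ⟨x, rfl⟩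
  · exact hH x
  · rw [map_mul, map_mul, hH x, hc']

omit hc in
theorem conj_apply_eq_of_extends {φ : H →* G} {ψ : Γ →* G} (hψ : ∀ x : H, ψ x = φ x) (x : H) :
    ψ c * φ x * (ψ c)⁻¹ = φ (adSub H h2 c x) := by
  rw [← hψ, ← hψ, adSub_coe, map_mul, map_mul, map_inv]

variable (φ : H →* G) (g : G)

open scoped Classical in
noncomputable def extension (y : Γ) : G :=
  if hy : y ∈ H then φ ⟨y, hy⟩ else φ ⟨y * c⁻¹, mul_inv_mem_of_notMem h2 hc hy⟩ * g

theorem extension_coe (x : H) : extension h2 hc φ g x = φ x := by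
  simp [extension]

theorem extension_coe_mul (x : H) : extension h2 hc φ g (x * c) = φ x * g := by
  have hxc : (x : Γ) * c ∉ H := fun h => hc ((H.mul_mem_cancel_left x.2).mp h)
  simp [extension, hxc]

variable {φ g}

theorem extension_mul (hg : ∀ x : H, φ (adSub H h2 c x) = g * φ x * g⁻¹)
    (hsq : g ^ 2 = φ (square h2 c)) (a b : Γ) :
    extension h2 hc φ g (a * b) = extension h2 hc φ g a * extension h2 hc φ g b := by
  rcases exists_eq_or_exists_eq_mul h2 hc a with ⟨x, rfl⟩ | ⟨x, rfl⟩ <;>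
    rcases exists_eq_or_exists_eq_mul h2 hc b with ⟨y, rfl⟩ | ⟨y, rfl⟩
  · rw [← Subgroup.coe_mul, extension_coe, extension_coe, extension_coe, map_mul]
  · rw [← mul_assoc, ← Subgroup.coe_mul, extension_coe_mul, extension_coe, extension_coe_mul,
      map_mul, mul_assoc]
  · have e : (x : Γ) * c * y = ↑(x * adSub H h2 c y) * c := by
      simp only [Subgroup.coe_mul, adSub_coe]
      group
    rw [e, extension_coe_mul, extension_coe_mul, extension_coe, map_mul, hg]
    group
  · have e : (x : Γ) * c * (y * c) = ↑(x * adSub H h2 c y * square h2 c) := by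
      simp only [Subgroup.coe_mul, adSub_coe, square]
      group
    rw [e, extension_coe, extension_coe_mul, extension_coe_mul, map_mul, map_mul, hg, ← hsq]
    group

theorem exists_extension (hg : ∀ x : H, φ (adSub H h2 c x) = g * φ x * g⁻¹)
    (hsq : g ^ 2 = φ (square h2 c)) : ∃ ψ : Γ →* G, ∀ x : H, ψ x = φ x :=
  ⟨MonoidHom.mk' (extension h2 hc φ g) (extension_mul h2 hc hg hsq), extension_coe h2 hc φ g⟩

theorem extension_unique {φ : H →* G}
    (hcentral : ∀ h : G, (∀ x : H, h * φ x * h⁻¹ = φ x) → h ∈ Subgroup.center G)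
    (htorsion : ∀ s ∈ Subgroup.center G, s ^ 2 = 1 → s = 1) {ψ₁ ψ₂ : Γ →* G}
    (h₁ : ∀ x : H, ψ₁ x = φ x) (h₂ : ∀ x : H, ψ₂ x = φ x) : ψ₁ = ψ₂ := by
  refine monoidHom_ext h2 hc (fun x => (h₁ x).trans (h₂ x).symm) ?_
  have hz : (ψ₁ c)⁻¹ * ψ₂ c ∈ Subgroup.center G :=
    hcentral _ fun x => inv_mul_conj_eq_of_conj_eq <| by
      rw [conj_apply_eq_of_extends h2 h₁, conj_apply_eq_of_extends h2 h₂]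
  have hsq : ψ₁ c ^ 2 = ψ₂ c ^ 2 := by
    rw [← map_pow, ← map_pow]
    exact (h₁ (square h2 c)).trans (h₂ _).symm
  exact eq_of_sq_eq_sq_of_inv_mul_mem_center htorsion hz hsq

end IndexTwo

theorem extension_of_odd_center_general {Γ G : Type*} [Group Γ] [Group G] (H : Subgroup Γ)
    (h2 : H.index = 2) (c : Γ) (hc : c ∉ H)
    (hodd : Odd (Nat.card (Subgroup.center G))) :
    (∀ z ∈ Subgroup.center G, ∃ t ∈ Subgroup.center G, t ^ 2 = z) ∧
    (∀ s ∈ Subgroup.center G, s ^ 2 = 1 → s = 1) ∧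
    (∀ φ : H →* G,
      (∀ h : G, (∀ x : H, h * φ x * h⁻¹ = φ x) ↔ h ∈ Subgroup.center G) →
      (∃ g : G, ∀ x : H, φ (adSub H h2 c x) = g * φ x * g⁻¹) →
      (∃ ψ : Γ →* G, ∀ (x : Γ) (hx : x ∈ H), ψ x = φ ⟨x, hx⟩) ∧
      (∀ ψ₁ ψ₂ : Γ →* G,
        (∀ (x : Γ) (hx : x ∈ H), ψ₁ x = φ ⟨x, hx⟩) →
        (∀ (x : Γ) (hx : x ∈ H), ψ₂ x = φ ⟨x, hx⟩) →
        ∃ k : G, ∀ y : Γ, ψ₂ y = k * ψ₁ y * k⁻¹)) := by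
  have hroot : ∀ z ∈ Subgroup.center G, ∃ t ∈ Subgroup.center G, t ^ 2 = z :=
    fun _ => (Subgroup.center G).exists_sq_eq_of_odd_natCard hodd
  have htorsion : ∀ s ∈ Subgroup.center G, s ^ 2 = 1 → s = 1 :=
    fun _ => (Subgroup.center G).eq_one_of_sq_eq_one_of_odd_natCard hodd
  refine ⟨hroot, htorsion, fun φ hstab ⟨g₀, hg₀⟩ => ?_⟩
  have hcentral := fun h => (hstab h).mp
  obtain ⟨g, hg, hsq⟩ := IndexTwo.exists_conj_eq_and_sq_eq h2 hcentral hroot hg₀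
  obtain ⟨ψ, hψ⟩ := IndexTwo.exists_extension h2 hc hg hsq
  refine ⟨⟨ψ, fun x hx => hψ ⟨x, hx⟩⟩, fun ψ₁ ψ₂ h₁ h₂ => ⟨1, fun y => ?_⟩⟩
  rw [IndexTwo.extension_unique h2 hc hcentral htorsion (fun x => h₁ x x.2) (fun x => h₂ x x.2)]
  group

/-- If `Z(G)` is finite of odd order, then squaring is surjective on
`Z(G)` (so `Z(G)/2Z(G)` is trivial), the only central square root of `e` is `e`, and every
good homomorphism `φ : Γ̃ → G` whose class is fixed by `τ` extends to `Γ`, uniquely up to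
conjugation. -/
theorem extension_of_odd_center {Γ G : Type*} [Group Γ] [Group G] (H : Subgroup Γ)
    (h2 : H.index = 2) (c : Γ) (hc : c ∉ H)
    (hfin : Finite (Subgroup.center G)) (hodd : Odd (Nat.card (Subgroup.center G))) :
    (∀ z ∈ Subgroup.center G, ∃ t ∈ Subgroup.center G, t ^ 2 = z) ∧
    (∀ s ∈ Subgroup.center G, s ^ 2 = 1 → s = 1) ∧
    (∀ φ : H →* G,
      (∀ h : G, (∀ x : H, h * φ x * h⁻¹ = φ x) ↔ h ∈ Subgroup.center G) →
      (∃ g : G, ∀ x : H, φ (adSub H h2 c x) = g * φ x * g⁻¹) →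
      (∃ ψ : Γ →* G, ∀ (x : Γ) (hx : x ∈ H), ψ x = φ ⟨x, hx⟩) ∧
      (∀ ψ₁ ψ₂ : Γ →* G,
        (∀ (x : Γ) (hx : x ∈ H), ψ₁ x = φ ⟨x, hx⟩) →
        (∀ (x : Γ) (hx : x ∈ H), ψ₂ x = φ ⟨x, hx⟩) →
        ∃ k : G, ∀ y : Γ, ψ₂ y = k * ψ₁ y * k⁻¹)) :=
  extension_of_odd_center_general H h2 c hc hodd
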